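/- Let i,j,k ≥ 0 with i+j+k even, and suppose L = (i+j+k)/2 satisfies L ≥ max(i,j,k) (so the 18-neighbor distance from the origin to (i,j,k) is L). Then the number of shortest 18-neighbor paths from (0,0,0) to (i,j,k) equals L! / ((L−i)!·(L−j)!·(L−k)!). -/

import Mathlib

/-- Two points of `ℤ³` are 18-neighbors: distinct, each coordinate differs by at most 1,
and the sum of absolute coordinate differences is at most 2. -/
def Adj18 (p q : ℤ × ℤ × ℤ) : Prop :=
  p ≠ q ∧ (p.1 - q.1).natAbs ≤ 1 ∧ (p.2.1 - q.2.1).natAbs ≤ 1 ∧ (p.2.2 - q.2.2).natAbs ≤ 1 ∧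
    (p.1 - q.1).natAbs + (p.2.1 - q.2.1).natAbs + (p.2.2 - q.2.2).natAbs ≤ 2

/-- `f` is an 18-neighbor path of length `n` from `p` to `q`. -/
def IsPath18 (n : ℕ) (f : Fin (n + 1) → ℤ × ℤ × ℤ) (p q : ℤ × ℤ × ℤ) : Prop :=
  f 0 = p ∧ f (Fin.last n) = q ∧ ∀ t : Fin n, Adj18 (f t.castSucc) (f t.succ)

/-!
Every 18-neighbour step raises the coordinate sum by at most 2, and by exactly 2 only for the
steps `e₂ + e₃`, `e₁ + e₃`, `e₁ + e₂`. A path of length `L` from the origin to a point of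
coordinate sum `2L` is therefore a word of length `L` in these three steps, and such a word ends
at `(i, j, k)` exactly when it uses them `L - i`, `L - j` and `L - k` times. Choosing the positions
of the first two letters gives `C(L, L - i) · C(i, L - j) = L! / ((L - i)! (L - j)! (L - k)!)`.
-/

open Finset

theorem Fin.partialSum_last {M : Type*} [AddCommMonoid M] {n : ℕ} (f : Fin n → M) :
    Fin.partialSum f (Fin.last n) = ∑ i, f i := by
  simp [Fin.partialSum, List.take_of_length_le (List.length_ofFn (f := f)).le, List.sum_ofFn]

theorem Fin.sum_succ_sub_castSucc {G : Type*} [AddCommGroup G] {n : ℕ} (g : Fin (n + 1) → G) :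
    ∑ i : Fin n, (g i.succ - g i.castSucc) = g (Fin.last n) - g 0 := by
  have h := congrFun (Fin.partialSum_left_neg g) (Fin.last n)
  simp only [Pi.vadd_apply, vadd_eq_add, Fin.partialSum_last] at h
  rw [← h]
  simp [sub_eq_neg_add]

def diagStep : Fin 3 → ℤ × ℤ × ℤ := ![(0, 1, 1), (1, 0, 1), (1, 1, 0)]

def coordSum (p : ℤ × ℤ × ℤ) : ℤ := p.1 + p.2.1 + p.2.2

theorem diagStep_injective : Function.Injective diagStep := by decide

theorem adj18_add_diagStep (p : ℤ × ℤ × ℤ) (m : Fin 3) : Adj18 p (p + diagStep m) := by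
  fin_cases m <;> simp [Adj18, diagStep, Prod.ext_iff]

theorem Adj18.coordSum_sub_le {p q : ℤ × ℤ × ℤ} (h : Adj18 p q) :
    coordSum q - coordSum p ≤ 2 := by
  obtain ⟨-, -, -, -, h⟩ := h
  simp only [coordSum]
  omega

theorem Adj18.exists_diagStep {p q : ℤ × ℤ × ℤ} (h : Adj18 p q)
    (h2 : coordSum q - coordSum p = 2) : ∃ m, q = p + diagStep m := by
  obtain ⟨-, hx, hy, hz, -⟩ := h
  obtain ⟨x, y, z⟩ := p
  obtain ⟨x', y', z'⟩ := q
  simp only [coordSum] at hx hy hz h2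
  have : (x' = x ∧ y' = y + 1 ∧ z' = z + 1) ∨ (x' = x + 1 ∧ y' = y ∧ z' = z + 1) ∨
      (x' = x + 1 ∧ y' = y + 1 ∧ z' = z) := by omega
  rcases this with ⟨rfl, rfl, rfl⟩ | ⟨rfl, rfl, rfl⟩ | ⟨rfl, rfl, rfl⟩
  exacts [⟨0, by simp [diagStep]⟩, ⟨1, by simp [diagStep]⟩, ⟨2, by simp [diagStep]⟩]

theorem IsPath18.exists_diagStep {n : ℕ} {f : Fin (n + 1) → ℤ × ℤ × ℤ} {p q : ℤ × ℤ × ℤ}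
    (hf : IsPath18 n f p q) (hpq : coordSum q - coordSum p = 2 * n) (t : Fin n) :
    ∃ m, f t.succ = f t.castSucc + diagStep m := by
  obtain ⟨rfl, rfl, hadj⟩ := hf
  have hle : ∀ s ∈ (univ : Finset (Fin n)), coordSum (f s.succ) - coordSum (f s.castSucc) ≤ 2 :=
    fun s _ => (hadj s).coordSum_sub_le
  have hsum : ∑ s : Fin n, (coordSum (f s.succ) - coordSum (f s.castSucc)) = ∑ _s : Fin n, 2 := by
    rw [Fin.sum_succ_sub_castSucc (fun s => coordSum (f s))]
    simp [hpq, mul_comm]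
  exact (hadj t).exists_diagStep ((sum_eq_sum_iff_of_le hle).1 hsum t (mem_univ t))

def wordPath {n : ℕ} (p : ℤ × ℤ × ℤ) (w : Fin n → Fin 3) : Fin (n + 1) → ℤ × ℤ × ℤ :=
  fun t => p + Fin.partialSum (fun s => diagStep (w s)) t

theorem wordPath_succ {n : ℕ} (p : ℤ × ℤ × ℤ) (w : Fin n → Fin 3) (t : Fin n) :
    wordPath p w t.succ = wordPath p w t.castSucc + diagStep (w t) := by
  simp only [wordPath, Fin.partialSum_succ, add_assoc]

theorem isPath18_wordPath {n : ℕ} (p : ℤ × ℤ × ℤ) (w : Fin n → Fin 3) :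
    IsPath18 n (wordPath p w) p (p + ∑ t, diagStep (w t)) := by
  refine ⟨by simp [wordPath], by simp [wordPath, Fin.partialSum_last], fun t => ?_⟩
  rw [wordPath_succ]
  exact adj18_add_diagStep _ _

theorem wordPath_injective {n : ℕ} (p : ℤ × ℤ × ℤ) :
    Function.Injective (wordPath (n := n) p) := by
  intro w w' h
  funext t
  apply diagStep_injective
  have := congrFun h t.succ
  rwa [wordPath_succ, wordPath_succ, congrFun h t.castSucc, add_right_inj] at this

theorem card_isPath18_eq_card_words {n : ℕ} {p q : ℤ × ℤ × ℤ}
    (hpq : coordSum q - coordSum p = 2 * n) :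
    Nat.card {f // IsPath18 n f p q} =
      Nat.card {w : Fin n → Fin 3 // p + ∑ t, diagStep (w t) = q} := by
  symm
  refine Nat.card_eq_of_bijective
    (fun w => ⟨wordPath p w, by obtain ⟨w, rfl⟩ := w; exact isPath18_wordPath p w⟩)
    ⟨fun w w' h => Subtype.ext (wordPath_injective p (congrArg Subtype.val h)), ?_⟩
  rintro ⟨f, hf⟩
  choose w hw using hf.exists_diagStep hpq
  have hfw : wordPath p w = f := by
    funext t
    induction t using Fin.induction with
    | zero => simp [wordPath, hf.1]
    | succ t ih => rw [wordPath_succ, ih, hw]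
  refine ⟨⟨w, ?_⟩, Subtype.ext hfw⟩
  rw [← hf.2.1, ← hfw]
  simp [wordPath, Fin.partialSum_last]

section Words

variable {ι : Type*} [Fintype ι]

theorem card_fiber_zero_add_one_add_two (w : ι → Fin 3) :
    #{t | w t = 0} + #{t | w t = 1} + #{t | w t = 2} = Fintype.card ι := by
  rw [← Fin.sum_univ_three (fun m => #{t | w t = m}), ← card_univ,
    card_eq_sum_card_fiberwise (fun t _ => mem_univ (w t))]

theorem sum_diagStep (w : ι → Fin 3) :
    ∑ t, diagStep (w t) =
      (((#{t | w t = 1} + #{t | w t = 2} : ℕ) : ℤ), ((#{t | w t = 0} + #{t | w t = 2} : ℕ) : ℤ),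
        ((#{t | w t = 0} + #{t | w t = 1} : ℕ) : ℤ)) := by
  rw [← sum_fiberwise' univ w diagStep, Fin.sum_univ_three]
  simp [diagStep]

theorem sum_diagStep_eq_iff {i j k : ℕ} (hL : i + j + k = 2 * Fintype.card ι)
    (hi : i ≤ Fintype.card ι) (hj : j ≤ Fintype.card ι) (w : ι → Fin 3) :
    ∑ t, diagStep (w t) = ((i : ℤ), (j : ℤ), (k : ℤ)) ↔
      #{t | w t = 0} = Fintype.card ι - i ∧ #{t | w t = 1} = Fintype.card ι - j := by
  have htotal := card_fiber_zero_add_one_add_two w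
  rw [sum_diagStep]
  simp only [Prod.mk.injEq]
  omega

theorem card_fin_three_words_fiber [DecidableEq ι] (a b : ℕ) :
    Fintype.card {w : ι → Fin 3 // #{t | w t = 0} = a ∧ #{t | w t = 1} = b} =
      (Fintype.card ι).choose a * (Fintype.card ι - a).choose b := by
  set word : (_ : Finset ι) × Finset ι → ι → Fin 3 :=
    fun AB t => if t ∈ AB.1 then 0 else if t ∈ AB.2 then 1 else 2
  have fiber_word {A B : Finset ι} (hBA : B ⊆ Aᶜ) :
      ({t | word ⟨A, B⟩ t = 0} : Finset ι) = A ∧ ({t | word ⟨A, B⟩ t = 1} : Finset ι) = B := by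
    constructor <;> ext t <;> by_cases hA : t ∈ A <;> by_cases hB : t ∈ B <;>
      simp_all [word, subset_iff]
  rw [Fintype.card_subtype]
  calc #{w : ι → Fin 3 | #{t | w t = 0} = a ∧ #{t | w t = 1} = b}
      = #((powersetCard a univ).sigma fun A => powersetCard b Aᶜ) := by
        refine card_nbij' (fun w => ⟨({t | w t = 0} : Finset ι), ({t | w t = 1} : Finset ι)⟩)
          word ?_ ?_ ?_ ?_
        · intro w hw
          simp_all [subset_iff]
        · rintro ⟨A, B⟩ hAB
          simp only [coe_sigma, Set.mem_sigma_iff, mem_coe, mem_powersetCard, subset_univ,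
            true_and] at hAB
          simp [fiber_word hAB.2.1, hAB]
        · intro w _
          funext t
          simp only [word, mem_filter, mem_univ, true_and]
          generalize w t = m
          fin_cases m <;> rfl
        · rintro ⟨A, B⟩ hAB
          simp only [coe_sigma, Set.mem_sigma_iff, mem_coe, mem_powersetCard, subset_univ,
            true_and] at hAB
          simp [fiber_word hAB.2.1]
    _ = _ := by
        rw [card_sigma, sum_congr rfl fun A hA => by
          rw [card_powersetCard, card_compl, (mem_powersetCard.1 hA).2]]
        rw [sum_const, card_powersetCard, card_univ, smul_eq_mul]

end Words

open Nat in
theorem Nat.factorial_div_factorial_mul_factorial_mul_factorial {a b c n : ℕ}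
    (h : a + b + c = n) : n ! / (a ! * b ! * c !) = n.choose a * (n - a).choose b := by
  have hc : n - a - b = c := by omega
  have hn := Nat.choose_mul_factorial_mul_factorial (show a ≤ n by omega)
  have hna := Nat.choose_mul_factorial_mul_factorial (show b ≤ n - a by omega)
  rw [hc] at hna
  refine Nat.div_eq_of_eq_mul_left (by positivity) ?_
  rw [← hn, ← hna]
  ring

/-- When `i+j+k = 2L` and `L ≥ max(i,j,k)`, the number of shortest 18-neighbor paths
from the origin to `(i,j,k)` equals `L!/((L−i)!·(L−j)!·(L−k)!)`. -/
theorem count_shortest_paths_18N_even (i j k L : ℕ)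
    (hL : i + j + k = 2 * L) (hi : i ≤ L) (hj : j ≤ L) (hk : k ≤ L) :
    Nat.card {f : Fin (L + 1) → ℤ × ℤ × ℤ //
        IsPath18 L f (0, 0, 0) ((i : ℤ), (j : ℤ), (k : ℤ))} =
      Nat.factorial L /
        (Nat.factorial (L - i) * Nat.factorial (L - j) * Nat.factorial (L - k)) := by
  calc Nat.card {f // IsPath18 L f (0, 0, 0) ((i : ℤ), (j : ℤ), (k : ℤ))}
      = Nat.card {w : Fin L → Fin 3 //
          (0, 0, 0) + ∑ t, diagStep (w t) = ((i : ℤ), (j : ℤ), (k : ℤ))} :=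
        card_isPath18_eq_card_words (by simp [coordSum]; omega)
    _ = Fintype.card {w : Fin L → Fin 3 // #{t | w t = 0} = L - i ∧ #{t | w t = 1} = L - j} := by
        rw [Nat.card_eq_fintype_card]
        refine Fintype.card_congr (Equiv.subtypeEquivRight fun w => ?_)
        rw [Prod.mk_zero_zero, Prod.mk_zero_zero, zero_add]
        simpa only [Fintype.card_fin] using
          sum_diagStep_eq_iff (k := k) (by simpa using hL) (by simpa using hi) (by simpa using hj) w
    _ = L.choose (L - i) * (L - (L - i)).choose (L - j) := by
        rw [card_fin_three_words_fiber, Fintype.card_fin]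
    _ = _ := (Nat.factorial_div_factorial_mul_factorial_mul_factorial (by omega)).symm
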